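/- arXiv:2408.02658 — 4 statements merged into one kernel-verified Lean document; each statement's English description precedes it below -/
import Mathlib

section
/- Let T : ℝ → ℝ be defined by T(t) = (3/2)t if t ≤ 2/3 and T(t) = 2 - (3/2)t if t > 2/3. Then the point 1 is not preperiodic for T: there do not exist integers n > m ≥ 0 with Tⁿ(1) = Tᵐ(1). -/
noncomputable def T (t : ℝ) : ℝ := if t ≤ 2/3 then 3/2 * t else 2 - 3/2 * t

/-!
Both branches of `T` send `a / 2 ^ n` with `a` odd to `a' / 2 ^ (n + 1)` with `a'` odd
(`a' = 3a` or `a' = 2 ^ (n + 2) - 3a`). Hence `T^[n] 1` has exact denominator `2 ^ n`, and the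
`2`-adic valuation `-n` separates the points of the orbit.
-/

def HasDyadicDenom (x : ℝ) (n : ℕ) : Prop := ∃ a : ℤ, Odd a ∧ x = a / 2 ^ n

lemma padicValRat_two_odd_div_two_pow {a : ℤ} (ha : Odd a) (n : ℕ) :
    padicValRat 2 (a / 2 ^ n) = -n := by
  have h2a : ¬ (2 : ℤ) ∣ a := by rwa [← even_iff_two_dvd, Int.not_even_iff_odd]
  have ha0 : (a : ℚ) ≠ 0 := Int.cast_ne_zero.2 (by rintro rfl; exact h2a (dvd_zero 2))
  rw [padicValRat.div ha0 (by positivity), padicValRat.pow, padicValRat.of_int,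
    padicValInt.eq_zero_of_not_dvd h2a, show padicValRat 2 2 = 1 from
    mod_cast padicValRat.self (p := 2) one_lt_two]
  ring

namespace HasDyadicDenom

lemma unique {x : ℝ} {n m : ℕ} (hn : HasDyadicDenom x n) (hm : HasDyadicDenom x m) : n = m := by
  obtain ⟨a, ha, rfl⟩ := hn
  obtain ⟨b, hb, hab⟩ := hm
  have hq : (a / 2 ^ n : ℚ) = b / 2 ^ m := by exact_mod_cast hab
  have hval := congrArg (padicValRat 2) hq
  rw [padicValRat_two_odd_div_two_pow ha, padicValRat_two_odd_div_two_pow hb] at hval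
  omega

lemma apply_T {x : ℝ} {n : ℕ} (hx : HasDyadicDenom x n) : HasDyadicDenom (T x) (n + 1) := by
  obtain ⟨a, ha, rfl⟩ := hx
  have h3 : Odd (3 : ℤ) := by decide
  unfold T
  split_ifs
  · exact ⟨3 * a, h3.mul ha, by push_cast; ring⟩
  · refine ⟨2 ^ (n + 2) - 3 * a, ?_, by push_cast; field_simp; ring⟩
    exact (even_two.pow_of_ne_zero (by omega)).sub_odd (h3.mul ha)

end HasDyadicDenom

lemma hasDyadicDenom_iterate_T_one (n : ℕ) : HasDyadicDenom (T^[n] 1) n := by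
  induction n with
  | zero => exact ⟨1, odd_one, by norm_num⟩
  | succ n ih => simpa only [Function.iterate_succ_apply'] using ih.apply_T

theorem one_not_preperiodic :
    ¬ ∃ n m : ℕ, m < n ∧ T^[n] 1 = T^[m] 1 := by
  rintro ⟨n, m, hmn, heq⟩
  have hnm : n = m := (hasDyadicDenom_iterate_T_one n).unique (heq ▸ hasDyadicDenom_iterate_T_one m)
  omega
end

section
/- Let T : ℝ → ℝ be defined by T(t) = (3/2)t if t ≤ 2/3 and T(t) = 2 - (3/2)t if t > 2/3. For every nontrivial closed interval I ⊆ [1/2, 1] with nonempty interior, there exists N ∈ ℕ such that T^N(I) ⊇ [1/2, 1]. -/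
lemma lemA {a b : ℝ} (hab : a ≤ b) (hb : b ≤ 2/3) :
    Set.Icc (3/2*a) (3/2*b) ⊆ T '' Set.Icc a b := by
  intro y hy
  refine ⟨2/3*y, ⟨by linarith [hy.1], by linarith [hy.2]⟩, ?_⟩
  have h1 : (2:ℝ)/3*y ≤ 2/3 := by nlinarith [hy.2]
  rw [T, if_pos h1]; ring

lemma lemB {a b : ℝ} (ha : 2/3 ≤ a) (hab : a ≤ b) :
    Set.Icc (2 - 3/2*b) (2 - 3/2*a) ⊆ T '' Set.Icc a b := by
  intro y hy
  refine ⟨2/3*(2-y), ⟨by linarith [hy.2], by linarith [hy.1]⟩, ?_⟩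
  rw [T]
  split_ifs with h
  · -- 2/3*(2-y) ≤ 2/3 forces y ≥ 1, and y ≤ 2 - 3/2*a ≤ 1, so y = 1
    have hy2 := hy.2
    linarith
  · ring

lemma stepA {a b c d : ℝ} (hab : a ≤ b) (hb : b ≤ 2/3) (hc : 3/2*a ≤ c) (hd : d ≤ 3/2*b) :
    Set.Icc c d ⊆ T '' Set.Icc a b :=
  (Set.Icc_subset_Icc hc hd).trans (lemA hab hb)

lemma stepB {a b c d : ℝ} (ha : 2/3 ≤ a) (hab : a ≤ b) (hc : 2 - 3/2*b ≤ c)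
    (hd : d ≤ 2 - 3/2*a) : Set.Icc c d ⊆ T '' Set.Icc a b :=
  (Set.Icc_subset_Icc hc hd).trans (lemB ha hab)

lemma iter_step {N : ℕ} {S S' : Set ℝ} (h : S' ⊆ T '' S)
    (h2 : Set.Icc (1/2:ℝ) 1 ⊆ T^[N] '' S') : Set.Icc (1/2:ℝ) 1 ⊆ T^[N+1] '' S := by
  rw [Function.iterate_succ, Set.image_comp]
  exact h2.trans (Set.image_mono h)

lemma cover {a b : ℝ} (ha : a ≤ 2/3) (hb : 1 ≤ b) :
    Set.Icc (1/2:ℝ) 1 ⊆ T '' Set.Icc a b :=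
  (stepB (a := 2/3) (b := b) le_rfl (by linarith) (by linarith) (by norm_num)).trans
    (Set.image_mono (Set.Icc_subset_Icc ha le_rfl))

lemma main_ind : ∀ n : ℕ, ∀ a b : ℝ, 1/2 ≤ a → a < b → b ≤ 1 → 1/2 * (8/9)^n ≤ b - a →
    ∃ N, Set.Icc (1/2:ℝ) 1 ⊆ T^[N] '' Set.Icc a b := by
  intro n
  induction n with
  | zero =>
    intro a b ha hab hb hlen
    norm_num at hlen
    refine ⟨1, ?_⟩
    simpa using cover (a := a) (b := b) (by linarith) (by linarith)
  | succ n ih =>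
    intro a b ha hab hb hlen
    have hp : (0:ℝ) ≤ (8/9)^n := by positivity
    rw [pow_succ] at hlen
    by_cases hbc : b ≤ 2/3
    · obtain ⟨N, hN⟩ := ih (3/2*a) (3/2*b) (by linarith) (by linarith) (by linarith)
        (by nlinarith)
      exact ⟨N+1, iter_step (stepA hab.le hbc le_rfl le_rfl) hN⟩
    push_neg at hbc
    by_cases hac : 2/3 ≤ a
    · obtain ⟨N, hN⟩ := ih (2 - 3/2*b) (2 - 3/2*a) (by linarith) (by linarith) (by linarith)
        (by nlinarith)
      exact ⟨N+1, iter_step (stepB hac hab.le le_rfl le_rfl) hN⟩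
    push_neg at hac
    by_cases hb89 : 8/9 ≤ b
    · -- T '' [a,b] ⊇ [2-3/2 b, 1] ⊇ [2/3-ish, 1] and one more step covers
      refine ⟨2, ?_⟩
      have h1 : Set.Icc (2 - 3/2*b) 1 ⊆ T '' Set.Icc a b :=
        (stepB (a := 2/3) (b := b) le_rfl (by linarith) le_rfl (by norm_num)).trans
          (Set.image_mono (Set.Icc_subset_Icc hac.le le_rfl))
      have h2 : Set.Icc (1/2:ℝ) 1 ⊆ T '' Set.Icc (2 - 3/2*b) 1 :=
        cover (by linarith) le_rfl
      calc Set.Icc (1/2:ℝ) 1 ⊆ T '' Set.Icc (2 - 3/2*b) 1 := h2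
        _ ⊆ T '' (T '' Set.Icc a b) := Set.image_mono h1
        _ = T^[2] '' Set.Icc a b := by
            rw [show T^[2] = T ∘ T from rfl, Set.image_comp]
    push_neg at hb89
    by_cases hm : 3/2*a ≤ 2 - 3/2*b
    · -- left piece: T '' [a, 2/3] = [3/2 a, 1], then T of that is [1/2, 2 - 9/4 a]
      obtain ⟨N, hN⟩ := ih (1/2) (2 - 9/4*a) (le_refl _) (by linarith) (by linarith)
        (by nlinarith)
      refine ⟨N+2, iter_step (S' := Set.Icc (3/2*a) 1) ?_
        (iter_step (S' := Set.Icc (1/2) (2 - 9/4*a)) ?_ hN)⟩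
      · exact (stepA (a := a) (b := 2/3) hac.le le_rfl le_rfl (by norm_num)).trans
          (Set.image_mono (Set.Icc_subset_Icc le_rfl hbc.le))
      · exact stepB (a := 3/2*a) (b := 1) (by linarith) (by linarith) (by norm_num)
          (by linarith)
    · push_neg at hm
      -- right piece: T '' [2/3, b] = [2-3/2 b, 1], then T of that is [1/2, 9/4 b - 1]
      obtain ⟨N, hN⟩ := ih (1/2) (9/4*b - 1) (le_refl _) (by linarith) (by linarith)
        (by nlinarith)
      refine ⟨N+2, iter_step (S' := Set.Icc (2 - 3/2*b) 1) ?_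
        (iter_step (S' := Set.Icc (1/2) (9/4*b - 1)) ?_ hN)⟩
      · exact (stepB (a := 2/3) (b := b) le_rfl (by linarith) le_rfl (by norm_num)).trans
          (Set.image_mono (Set.Icc_subset_Icc hac.le le_rfl))
      · exact stepB (a := 2 - 3/2*b) (b := 1) (by linarith) (by linarith) (by norm_num)
          (by linarith)

theorem T_iterate_covers_half_one (a b : ℝ) (ha : 1/2 ≤ a) (hab : a < b) (hb : b ≤ 1) :
    ∃ N : ℕ, Set.Icc (1/2 : ℝ) 1 ⊆ T^[N] '' Set.Icc a b := by
  obtain ⟨n, hn⟩ := exists_pow_lt_of_lt_one (x := 2*(b-a)) (y := (8/9:ℝ))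
    (by linarith) (by norm_num)
  exact main_ind n a b ha hab hb (by linarith)
end

section
/- Let T : ℝ → ℝ be defined by T(t) = (3/2)t if t ≤ 2/3 and T(t) = 2 - (3/2)t if t > 2/3. Then the set of preimages ⋃_{n ≥ 0} T^{-n}({4/5}) is dense in the open interval (0, 4/3). -/
/-!
Away from `4/5`, every interval `[a, b] ⊆ [0, 4/3]` has an image under `T` or `T^[2]` containing
an interval at least `9/8` times as long, still inside `[0, 4/3]`: a single branch of `T` stretches
by `3/2`, and an interval straddling the turning point `2/3` but missing `4/5` has a half whose
second image is `9/4` times as long. Intervals cannot grow forever inside `[0, 4/3]`, so after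
finitely many steps `4/5` is reached, and pulling back along the branches gives a preimage of
`4/5` in `[a, b]`.
-/

open Set

def backwardOrbit {α : Type*} (f : α → α) (x : α) : Set α := {s | ∃ n, f^[n] s = x}

section BackwardOrbit

variable {α : Type*} {f : α → α} {x : α}

theorem mem_backwardOrbit_self : x ∈ backwardOrbit f x := ⟨0, rfl⟩

theorem mem_backwardOrbit_of_apply_mem {s : α} (h : f s ∈ backwardOrbit f x) :
    s ∈ backwardOrbit f x := by
  obtain ⟨n, hn⟩ := h
  exact ⟨n + 1, hn⟩

theorem inter_backwardOrbit_nonempty_of_subset_image {s t : Set α} (hts : t ⊆ f '' s)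
    (ht : (t ∩ backwardOrbit f x).Nonempty) : (s ∩ backwardOrbit f x).Nonempty := by
  obtain ⟨y, hyt, hy⟩ := ht
  obtain ⟨z, hzs, rfl⟩ := hts hyt
  exact ⟨z, hzs, mem_backwardOrbit_of_apply_mem hy⟩

end BackwardOrbit

theorem T_two_thirds_mul {y : ℝ} (hy : y ≤ 1) : T (2/3 * y) = y := by
  rw [T, if_pos (by linarith)]
  ring

theorem T_four_thirds_sub {y : ℝ} (hy : y ≤ 1) : T (4/3 - 2/3 * y) = y := by
  by_cases h : 4/3 - 2/3 * y ≤ 2/3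
  · rw [T, if_pos h, le_antisymm hy (by linarith)]
    norm_num
  · rw [T, if_neg h]
    ring

theorem Icc_subset_image_T_increasing_branch {a b c d : ℝ} (ha : a ≤ 2/3 * c)
    (hb : 2/3 * d ≤ b) (hd : d ≤ 1) : Icc c d ⊆ T '' Icc a b := fun y ⟨hcy, hyd⟩ =>
  ⟨2/3 * y, ⟨by linarith, by linarith⟩, T_two_thirds_mul (by linarith)⟩

theorem Icc_subset_image_T_decreasing_branch {a b c d : ℝ} (ha : a ≤ 4/3 - 2/3 * d)
    (hb : 4/3 - 2/3 * c ≤ b) (hd : d ≤ 1) : Icc c d ⊆ T '' Icc a b := fun y ⟨hcy, hyd⟩ =>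
  ⟨4/3 - 2/3 * y, ⟨by linarith, by linarith⟩, T_four_thirds_sub (by linarith)⟩

theorem Icc_inter_backwardOrbit_nonempty_or_expands {a b : ℝ} (ha : 0 ≤ a) (hab : a ≤ b)
    (hb : b ≤ 4/3) :
    (Icc a b ∩ backwardOrbit T (4/5)).Nonempty ∨
      ∃ c d, 0 ≤ c ∧ d ≤ 4/3 ∧ 9/8 * (b - a) ≤ d - c ∧
        ((Icc c d ∩ backwardOrbit T (4/5)).Nonempty →
          (Icc a b ∩ backwardOrbit T (4/5)).Nonempty) := by
  have hit : ∀ {c d : ℝ}, c ≤ 4/5 → 4/5 ≤ d →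
      (Icc c d ∩ backwardOrbit T (4/5)).Nonempty :=
    fun hc hd => ⟨4/5, ⟨hc, hd⟩, mem_backwardOrbit_self⟩
  by_cases hb₁ : b ≤ 2/3
  · refine .inr ⟨3/2 * a, 3/2 * b, by linarith, by linarith, by linarith, ?_⟩
    exact inter_backwardOrbit_nonempty_of_subset_image
      (Icc_subset_image_T_increasing_branch (by linarith) (by linarith) (by linarith))
  by_cases ha₁ : 2/3 ≤ a
  · refine .inr ⟨2 - 3/2 * b, 2 - 3/2 * a, by linarith, by linarith, by linarith, ?_⟩
    exact inter_backwardOrbit_nonempty_of_subset_image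
      (Icc_subset_image_T_decreasing_branch (by linarith) (by linarith) (by linarith))
  by_cases hb₂ : 4/5 ≤ b
  · exact .inl (hit (by linarith) hb₂)
  push Not at hb₁ ha₁ hb₂
  by_cases hleft : b - 2/3 ≤ 2/3 - a
  · -- `T` maps `[a, 2/3]` onto `[3a/2, 1]`, and then `[3a/2, 1]` onto `[1/2, 2 - 9a/4]`
    have h₁ : Icc (3/2 * a) 1 ⊆ T '' Icc a b :=
      Icc_subset_image_T_increasing_branch (by linarith) (by linarith) le_rfl
    by_cases ha₂ : a ≤ 8/15
    · exact .inl <|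
        inter_backwardOrbit_nonempty_of_subset_image h₁ (hit (by linarith) (by norm_num))
    refine .inr ⟨1/2, 2 - 9/4 * a, by norm_num, by linarith, by linarith, fun h => ?_⟩
    refine inter_backwardOrbit_nonempty_of_subset_image h₁
      (inter_backwardOrbit_nonempty_of_subset_image ?_ h)
    exact Icc_subset_image_T_decreasing_branch (by linarith) (by linarith) (by linarith)
  · -- `T` maps `[2/3, b]` onto `[2 - 3b/2, 1]`, and then that onto `[1/2, 9b/4 - 1]`
    have h₁ : Icc (2 - 3/2 * b) 1 ⊆ T '' Icc a b :=
      Icc_subset_image_T_decreasing_branch (by linarith) (by linarith) le_rfl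
    refine .inr ⟨1/2, 9/4 * b - 1, by norm_num, by linarith, by linarith, fun h => ?_⟩
    refine inter_backwardOrbit_nonempty_of_subset_image h₁
      (inter_backwardOrbit_nonempty_of_subset_image ?_ h)
    exact Icc_subset_image_T_decreasing_branch (by linarith) (by linarith) (by linarith)

theorem Icc_inter_backwardOrbit_nonempty_of_pow_le (N : ℕ) {a b : ℝ} (ha : 0 ≤ a)
    (hb : b ≤ 4/3) (hN : 4/3 * (8/9) ^ N ≤ b - a) :
    (Icc a b ∩ backwardOrbit T (4/5)).Nonempty := by
  induction N generalizing a b with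
  | zero =>
    rw [pow_zero, mul_one] at hN
    exact ⟨4/5, ⟨by linarith, by linarith⟩, mem_backwardOrbit_self⟩
  | succ N ih =>
    have hpos : 0 < 4/3 * (8/9 : ℝ) ^ (N + 1) := by positivity
    rcases Icc_inter_backwardOrbit_nonempty_or_expands ha (by linarith) hb with
      h | ⟨c, d, hc, hd, hcd, h⟩
    · exact h
    · refine h (ih hc hd ?_)
      calc 4/3 * (8/9 : ℝ) ^ N = 9/8 * (4/3 * (8/9) ^ (N + 1)) := by ring
        _ ≤ 9/8 * (b - a) := by gcongr
        _ ≤ d - c := hcd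

theorem Icc_inter_backwardOrbit_nonempty {a b : ℝ} (ha : 0 ≤ a) (hab : a < b) (hb : b ≤ 4/3) :
    (Icc a b ∩ backwardOrbit T (4/5)).Nonempty := by
  obtain ⟨N, hN⟩ := exists_pow_lt_of_lt_one (show 0 < 3/4 * (b - a) by linarith)
    (show (8/9 : ℝ) < 1 by norm_num)
  exact Icc_inter_backwardOrbit_nonempty_of_pow_le N ha hb (by linarith)

theorem backward_orbit_of_fixed_point_dense :
    Set.Ioo (0 : ℝ) (4/3) ⊆ closure {s : ℝ | ∃ n : ℕ, T^[n] s = 4/5} := by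
  rintro x ⟨hx₀, hx₁⟩
  refine Metric.mem_closure_iff.2 fun ε hε => ?_
  set δ := min (ε / 2) (min x (4/3 - x))
  have hδ : 0 < δ := lt_min (half_pos hε) (lt_min hx₀ (by linarith))
  have hδε : δ ≤ ε / 2 := min_le_left _ _
  have hδx : δ ≤ x := (min_le_right _ _).trans (min_le_left _ _)
  have hδx' : δ ≤ 4/3 - x := (min_le_right _ _).trans (min_le_right _ _)
  obtain ⟨s, ⟨hs₁, hs₂⟩, hs⟩ :=
    Icc_inter_backwardOrbit_nonempty (a := x - δ) (b := x + δ) (by linarith) (by linarith)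
      (by linarith)
  refine ⟨s, hs, ?_⟩
  rw [Real.dist_eq, abs_sub_lt_iff]
  constructor <;> linarith
end

section
/- Let T : ℝ → ℝ be defined by T(t) = (3/2)t if t ≤ 2/3 and T(t) = 2 - (3/2)t if t > 2/3. Every rational fixed point or periodic point of T in [0,1] has odd denominator in lowest terms; in particular, no dyadic rational a/2ⁿ with n ≥ 1 and a odd is periodic under T. -/
/-- Rational version of `T`. -/
def Tq (q : ℚ) : ℚ := if q ≤ 2/3 then 3/2 * q else 2 - 3/2 * q

lemma T_cast (q : ℚ) : T (q : ℝ) = (Tq q : ℝ) := by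
  unfold T Tq
  by_cases h : q ≤ 2/3
  all_goals
    have hc : ((2/3:ℚ):ℝ) = (2/3:ℝ) := by norm_num
  · have h' : (q:ℝ) ≤ 2/3 := by rw [← hc]; exact_mod_cast h
    rw [if_pos h, if_pos h']; push_cast; ring
  · have h' : ¬ (q:ℝ) ≤ 2/3 := by
      rw [← hc]; intro hh; exact h (by exact_mod_cast hh)
    rw [if_neg h, if_neg h']; push_cast; ring

lemma T_iter_cast (p : ℕ) (q : ℚ) : T^[p] (q : ℝ) = (Tq^[p] q : ℝ) := by
  induction p with
  | zero => simp
  | succ n ih => rw [Function.iterate_succ_apply', Function.iterate_succ_apply', ih, T_cast]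

lemma val32 : padicValRat 2 (3/2 : ℚ) = -1 := by
  rw [padicValRat.div (by norm_num) (by norm_num)]
  have h3 : padicValRat 2 (3 : ℚ) = 0 := by
    have : ((3:ℤ) : ℚ) = (3:ℚ) := by norm_num
    rw [← this, padicValRat.of_int]
    exact_mod_cast padicValInt.eq_zero_of_not_dvd (p := 2) (z := 3) (by decide)
  have h2 : padicValRat 2 (2 : ℚ) = 1 := padicValRat.self (by norm_num)
  rw [h3, h2]; ring

lemma val_Tq (q : ℚ) (h : padicValRat 2 q < 0) :
    padicValRat 2 (Tq q) = padicValRat 2 q - 1 := by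
  have hq0 : q ≠ 0 := by rintro rfl; simp at h
  have hm : padicValRat 2 (3/2 * q) = padicValRat 2 q - 1 := by
    rw [padicValRat.mul (by norm_num) hq0, val32]; ring
  unfold Tq
  by_cases hc : q ≤ 2/3
  · rw [if_pos hc, hm]
  · rw [if_neg hc]
    have hne : (3/2 * q : ℚ) ≠ 0 := mul_ne_zero (by norm_num) hq0
    have h2v : padicValRat 2 (2 : ℚ) = 1 := padicValRat.self (by norm_num)
    have hv : padicValRat 2 (-(3/2 * q)) = padicValRat 2 q - 1 := by
      rw [padicValRat.neg, hm]
    have hsum : -(3/2 * q) + (2 : ℚ) ≠ 0 := by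
      intro hh
      have hx : -(3/2 * q : ℚ) = -2 := by linarith
      rw [hx, show ((-2:ℚ)) = -(2:ℚ) from by norm_num, padicValRat.neg, h2v] at hv
      omega
    have hvne : padicValRat 2 (-(3/2 * q)) < padicValRat 2 (2 : ℚ) := by
      rw [hv, h2v]; omega
    have : (2 : ℚ) - 3/2 * q = -(3/2*q) + 2 := by ring
    rw [this, padicValRat.add_eq_of_lt hsum (neg_ne_zero.mpr hne) (by norm_num) hvne,
      padicValRat.neg, hm]

lemma val_Tq_iter (q : ℚ) (h : padicValRat 2 q < 0) (p : ℕ) :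
    padicValRat 2 (Tq^[p] q) = padicValRat 2 q - p := by
  induction p with
  | zero => simp
  | succ n ih =>
      rw [Function.iterate_succ_apply', val_Tq _ (by omega), ih]
      push_cast; ring

lemma not_periodic_of_val_neg (q : ℚ) (h : padicValRat 2 q < 0) :
    ¬ ∃ p : ℕ, 0 < p ∧ T^[p] (q : ℝ) = (q : ℝ) := by
  rintro ⟨p, hp, heq⟩
  rw [T_iter_cast] at heq
  have : Tq^[p] q = q := by exact_mod_cast heq
  have hv := val_Tq_iter q h p
  rw [this] at hv
  omega

theorem periodic_rationals_have_odd_denominator :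
    (∀ q : ℚ, (q : ℝ) ∈ Set.Icc (0:ℝ) 1 →
      (∃ p : ℕ, 0 < p ∧ T^[p] (q : ℝ) = (q : ℝ)) → Odd q.den) ∧
    (∀ a n : ℕ, Odd a → 1 ≤ n →
      ¬ ∃ p : ℕ, 0 < p ∧ T^[p] ((a : ℝ) / 2 ^ n) = (a : ℝ) / 2 ^ n) := by
  constructor
  · intro q _ hper
    by_contra hodd
    have h2 : 2 ∣ q.den := (Nat.not_odd_iff_even.mp hodd).two_dvd
    have hval : padicValRat 2 q < 0 := by
      have hnotnum : ¬ 2 ∣ q.num.natAbs := by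
        intro hdvd
        have := Nat.dvd_gcd hdvd h2
        rw [Nat.Coprime.gcd_eq_one q.reduced] at this
        omega
      have hnum : padicValInt 2 q.num = 0 := by
        rw [padicValInt, padicValNat.eq_zero_of_not_dvd hnotnum]
      have hden : 1 ≤ padicValNat 2 q.den :=
        one_le_padicValNat_of_dvd q.pos.ne' h2
      rw [padicValRat, hnum]
      omega
    exact not_periodic_of_val_neg q hval hper
  · intro a n ha hn
    have ha0 : (a : ℚ) ≠ 0 := by
      have : a ≠ 0 := by rintro rfl; simp [Nat.odd_iff] at ha
      exact_mod_cast this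
    have hcast : (a : ℝ) / 2 ^ n = (((a : ℚ) / 2 ^ n : ℚ) : ℝ) := by push_cast; ring
    rw [hcast]
    apply not_periodic_of_val_neg
    rw [padicValRat.div ha0 (by positivity)]
    have hva : padicValRat 2 (a : ℚ) = 0 := by
      have : ((a : ℤ) : ℚ) = (a : ℚ) := by push_cast; ring
      rw [← this, padicValRat.of_int, padicValInt]
      simp only [Int.natAbs_natCast]
      rw [padicValNat.eq_zero_of_not_dvd]
      · simp
      · rw [Nat.odd_iff] at ha; omega
    have h2v : padicValRat 2 (2 : ℚ) = 1 := padicValRat.self (by norm_num)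
    have hvp : padicValRat 2 ((2:ℚ) ^ n) = n := by
      rw [padicValRat.pow (2:ℚ), h2v]; ring
    rw [hva, hvp]
    omega
end
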